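/- Let n = 2m ≥ 4 be an even integer and c_n = 2^{n-2}((n-2)/2)! π^{n/2}. Let f ∈ L¹(ℝⁿ) with f ≥ 0, and let v(x) = (1/c_n)∫_{ℝⁿ} log(|x-y|/|y|) f(y) dy, so that -(-Δ)^i v(y) = (|d_i|/c_n)∫_{ℝⁿ} f(z)/|y-z|^{2i} dz > 0 for i = 1, …, m-1 (where d_1 = -(n-2) and d_{i+1} = 2i(n-2i-2) d_i). Then there exists a constant C, depending only on n and ‖f‖_{L¹}, such that for every x ∈ ℝⁿ and every i = 1, …, m-1: 0 < ⨍_{∂B₄(x)} ( -(-Δ)^i v(y) ) dσ(y) ≤ C. -/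

import Mathlib

open MeasureTheory Real Filter Metric
open scoped ENNReal Topology

/-- The constant `c_n = 2^(n-2) * ((n-2)/2)! * pi^(n/2)`. -/
noncomputable def cconst (n : ℕ) : ℝ :=
  2 ^ (n - 2) * (Nat.factorial ((n - 2) / 2)) * Real.pi ^ (n / 2)

/-- The logarithmic potential `v x = (1/c_n) * ∫ log (|x-y|/|y|) f y dy`. -/
noncomputable def logPot (n : ℕ) (f : EuclideanSpace ℝ (Fin n) → ℝ)
    (x : EuclideanSpace ℝ (Fin n)) : ℝ :=
  (1 / cconst n) * ∫ y, Real.log (‖x - y‖ / ‖y‖) * f y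

/-- The Laplacian of `f : ℝ^n → ℝ`, as the trace of the second derivative. -/
noncomputable def laplacian {n : ℕ} (f : EuclideanSpace ℝ (Fin n) → ℝ)
    (x : EuclideanSpace ℝ (Fin n)) : ℝ :=
  ∑ i, iteratedFDeriv ℝ 2 f x ![EuclideanSpace.single i 1, EuclideanSpace.single i 1]

/-- The m-th iterate `(-Δ)^m` of the negative Laplacian. -/
noncomputable def negLapIter {n : ℕ} (m : ℕ) (f : EuclideanSpace ℝ (Fin n) → ℝ) :
    EuclideanSpace ℝ (Fin n) → ℝ :=
  (fun (g : EuclideanSpace ℝ (Fin n) → ℝ) x => -laplacian g x)^[m] f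

/-- The surface measure on the unit sphere of `ℝ^n`, obtained from the polar decomposition of
the Lebesgue measure. -/
noncomputable def sphereMeasure (n : ℕ) :
    MeasureTheory.Measure (Metric.sphere (0 : EuclideanSpace ℝ (Fin n)) 1) :=
  (volume : MeasureTheory.Measure (EuclideanSpace ℝ (Fin n))).toSphere

/-- `ω_{n-1}`, the total surface measure of the unit sphere in `ℝ^n`. -/
noncomputable def omegaN (n : ℕ) : ℝ := (sphereMeasure n Set.univ).toReal

/-- The surface integral `∫_{∂B_s(0)} g dσ`, written in polar coordinates as
`s^{n-1} ∫_{S^{n-1}} g(sθ) dθ`. -/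
noncomputable def sphereIntegral (n : ℕ) (g : EuclideanSpace ℝ (Fin n) → ℝ) (s : ℝ) : ℝ :=
  s ^ (n - 1) * ∫ θ, g (s • (θ : EuclideanSpace ℝ (Fin n))) ∂(sphereMeasure n)

/-- The spherical average `⨍_{∂B_s(0)} g dσ = (1/ω_{n-1}) ∫_{S^{n-1}} g(sθ) dθ`. -/
noncomputable def sphereAvg (n : ℕ) (g : EuclideanSpace ℝ (Fin n) → ℝ) (s : ℝ) : ℝ :=
  (∫ θ, g (s • (θ : EuclideanSpace ℝ (Fin n))) ∂(sphereMeasure n)) / omegaN n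

/-- The coefficients `d_1 = -(n-2)`, `d_{i+1} = 2i(n-2i-2) d_i`. -/
noncomputable def dCoeff (n : ℕ) : ℕ → ℝ
  | 0 => 0
  | 1 => -((n : ℝ) - 2)
  | (i + 2) => 2 * ((i : ℝ) + 1) * ((n : ℝ) - 2 * ((i : ℝ) + 1) - 2) * dCoeff n (i + 1)

/-!
On `∂B₄(x)` the integrand is `|d_i| / c_n` times the Riesz potential `∫ f(z) |y - z|^{-2i} dz`.
It is positive, and by Tonelli its spherical average is at most
`‖f‖₁ · sup_w ∫_{S^{n-1}} |w - θ|^{-α} dθ` with `α = 2i ≤ n - 2` (shrinking the radius `4` to `1`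
only increases the kernel). This supremum is finite. A cap `A` of radius `r` on the unit sphere has
measure `O(r^{n-1})`: the cone `(0,1)·A` is covered by its shell `(1-r,1)·A ⊆ B(q, 2r)` together
with its own dilate by `1 - r/2`, so its volume is at most `(2/r)|B(q, 2r)|`. Splitting the sphere
into dyadic caps around `w` bounds the kernel integral by a geometric series, which converges
because `α < n - 1`.
-/

open Module Set
open scoped Pointwise

lemma inv_pow_le_one_or_exists_le_inv_two_pow {x : ℝ} (hx : 0 ≤ x) (α : ℕ) :
    (x ^ α)⁻¹ ≤ 1 ∨ ∃ k : ℕ, x ≤ 2⁻¹ ^ k ∧ (x ^ α)⁻¹ ≤ 2 ^ ((k + 1) * α) := by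
  rcases hx.eq_or_lt with rfl | hx₀
  · left; cases α <;> simp
  rcases le_or_gt 1 x with h₁ | h₁
  · exact Or.inl (inv_le_one_of_one_le₀ (one_le_pow₀ h₁))
  obtain ⟨k, hk, hk'⟩ := exists_nat_pow_near (one_le_inv₀ hx₀ |>.2 h₁.le) one_lt_two
  refine Or.inr ⟨k, ?_, ?_⟩
  · rw [inv_pow]; exact (le_inv_comm₀ (by positivity) hx₀).1 hk
  · rw [← inv_pow, pow_mul]; exact pow_le_pow_left₀ (by positivity) hk'.le α

lemma two_pow_mul_inv_two_pow_le {α d : ℕ} (h : α + 2 ≤ d) (k : ℕ) :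
    (2 : ℝ) ^ ((k + 1) * α) * (2⁻¹ ^ k) ^ (d - 1) ≤ 2 ^ d * 2⁻¹ ^ k := by
  rw [← pow_mul, inv_pow, inv_pow, ← div_eq_mul_inv, ← div_eq_mul_inv,
    div_le_div_iff₀ (by positivity) (by positivity), ← pow_add, ← pow_add]
  refine pow_le_pow_right₀ one_le_two ?_
  have : (k + 1) * α ≤ (k + 1) * (d - 2) := Nat.mul_le_mul_left _ (by omega)
  zify [show 2 ≤ d by omega, show 1 ≤ d by omega] at this ⊢
  nlinarith

section KernelIntegral

variable {Θ Z : Type*} [MeasurableSpace Θ] [MeasurableSpace Z] {σ : Measure Θ} {ν : Measure Z}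
  [SFinite σ] [SFinite ν] {f : Z → ℝ} {k : Θ → Z → ℝ} {K : ℝ≥0∞}

lemma lintegral_enorm_integral_mul_le (hf : AEStronglyMeasurable f ν) (hk₀ : ∀ θ z, 0 ≤ k θ z)
    (hk : Measurable (Function.uncurry k)) (hK : ∀ z, ∫⁻ θ, ENNReal.ofReal (k θ z) ∂σ ≤ K) :
    ∫⁻ θ, ‖∫ z, f z * k θ z ∂ν‖ₑ ∂σ ≤ K * ∫⁻ z, ‖f z‖ₑ ∂ν :=
  calc ∫⁻ θ, ‖∫ z, f z * k θ z ∂ν‖ₑ ∂σ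
      ≤ ∫⁻ θ, ∫⁻ z, ‖f z‖ₑ * ENNReal.ofReal (k θ z) ∂ν ∂σ := by
        refine lintegral_mono fun θ => (enorm_integral_le_lintegral_enorm _).trans_eq ?_
        simp only [enorm_mul, Real.enorm_of_nonneg (hk₀ θ _)]
    _ = ∫⁻ z, ‖f z‖ₑ * ∫⁻ θ, ENNReal.ofReal (k θ z) ∂σ ∂ν := by
        rw [lintegral_lintegral_swap]
        · refine lintegral_congr fun z => lintegral_const_mul _ ?_
          exact (hk.comp measurable_prodMk_right).ennreal_ofReal
        · exact hf.enorm.comp_snd.mul hk.ennreal_ofReal.aemeasurable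
    _ ≤ ∫⁻ z, ‖f z‖ₑ * K ∂ν := lintegral_mono fun z => by gcongr; exact hK z
    _ = K * ∫⁻ z, ‖f z‖ₑ ∂ν := by rw [lintegral_mul_const'' _ hf.enorm, mul_comm]

lemma integrable_integral_mul (hf : Integrable f ν) (hk₀ : ∀ θ z, 0 ≤ k θ z)
    (hk : Measurable (Function.uncurry k)) (hK : ∀ z, ∫⁻ θ, ENNReal.ofReal (k θ z) ∂σ ≤ K)
    (hK_top : K ≠ ∞) : Integrable (fun θ => ∫ z, f z * k θ z ∂ν) σ :=
  ⟨(hf.1.comp_snd.mul hk.aestronglyMeasurable).integral_prod_right',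
    (lintegral_enorm_integral_mul_le hf.1 hk₀ hk hK).trans_lt
      (ENNReal.mul_lt_top hK_top.lt_top hf.2)⟩

lemma integral_integral_mul_le (hf : Integrable f ν) (hk₀ : ∀ θ z, 0 ≤ k θ z)
    (hk : Measurable (Function.uncurry k)) (hK : ∀ z, ∫⁻ θ, ENNReal.ofReal (k θ z) ∂σ ≤ K)
    (hK_top : K ≠ ∞) :
    ∫ θ, ∫ z, f z * k θ z ∂ν ∂σ ≤ K.toReal * ∫ z, ‖f z‖ ∂ν := by
  rw [integral_norm_eq_lintegral_enorm hf.1, ← ENNReal.toReal_mul]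
  refine (le_abs_self _).trans ?_
  rw [← Real.norm_eq_abs, ← toReal_enorm]
  refine ENNReal.toReal_mono (ENNReal.mul_ne_top hK_top hf.2.ne) ?_
  exact (enorm_integral_le_lintegral_enorm _).trans (lintegral_enorm_integral_mul_le hf.1 hk₀ hk hK)

end KernelIntegral

section SphereKernel

variable {E : Type*} [NormedAddCommGroup E] [NormedSpace ℝ E]

lemma Ioo_zero_one_smul_subset (s : Set E) {r : ℝ} (hr : 0 < r) :
    Ioo (0 : ℝ) 1 • s ⊆ Ioo (1 - r) 1 • s ∪ (1 - r / 2) • (Ioo (0 : ℝ) 1 • s) := by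
  rintro _ ⟨t, ht, a, ha, rfl⟩
  rcases lt_or_ge (1 - r) t with h | h
  · exact Or.inl ⟨t, ⟨h, ht.2⟩, a, ha, rfl⟩
  · have hc : 0 < 1 - r / 2 := by linarith [ht.1]
    refine Or.inr ⟨(t / (1 - r / 2)) • a, ⟨t / (1 - r / 2), ⟨div_pos ht.1 hc, ?_⟩, a, ha, rfl⟩, ?_⟩
    · rw [div_lt_one hc]; linarith
    · simp only [smul_smul, mul_div_cancel₀ _ hc.ne']

lemma Ioo_smul_sphere_inter_closedBall_subset_ball (q : E) (r : ℝ) :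
    Ioo (1 - r) 1 • (sphere 0 1 ∩ closedBall q r) ⊆ ball q (2 * r) := by
  rintro _ ⟨t, ht, a, ⟨ha₁, ha₂⟩, rfl⟩
  rw [mem_sphere_zero_iff_norm] at ha₁
  rw [mem_closedBall, dist_eq_norm] at ha₂
  have : ‖t • a - a‖ = 1 - t := by
    rw [show t • a - a = (t - 1) • a by rw [sub_smul, one_smul], norm_smul, ha₁, mul_one,
      Real.norm_of_nonpos (by linarith [ht.2])]
    ring
  rw [mem_ball, dist_eq_norm]
  linarith [norm_sub_le_norm_sub_add_norm_sub (t • a) a q, ht.1]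

lemma inv_norm_add_smul_sub_pow_le {R : ℝ} (hR : 1 ≤ R) (x y z : E) (α : ℕ) :
    (‖x + R • y - z‖ ^ α)⁻¹ ≤ (‖y - R⁻¹ • (z - x)‖ ^ α)⁻¹ := by
  have : x + R • y - z = R • (y - R⁻¹ • (z - x)) := by
    rw [smul_sub, smul_inv_smul₀ (by positivity)]; abel
  rw [this, norm_smul, Real.norm_of_nonneg (by linarith), mul_pow, mul_inv]
  exact mul_le_of_le_one_left (by positivity) (inv_le_one_of_one_le₀ (one_le_pow₀ hR))

variable [FiniteDimensional ℝ E] [MeasurableSpace E] [BorelSpace E]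
  (μ : Measure E) [μ.IsAddHaarMeasure]

lemma mul_measureReal_Ioo_zero_one_smul_le [Nontrivial E] (s : Set E)
    (hs : μ (Ioo (0 : ℝ) 1 • s) ≠ ∞) {r : ℝ} (hr₀ : 0 < r) (hr₁ : r ≤ 1) :
    r / 2 * μ.real (Ioo (0 : ℝ) 1 • s) ≤ μ.real (Ioo (1 - r) 1 • s) := by
  set S := Ioo (0 : ℝ) 1 • s
  have hshell : μ (Ioo (1 - r) 1 • s) ≠ ∞ :=
    measure_ne_top_of_subset (smul_subset_smul_right (Ioo_subset_Ioo_left (by linarith))) hs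
  have hsmul : μ ((1 - r / 2) • S) = ENNReal.ofReal ((1 - r / 2) ^ finrank ℝ E) * μ S :=
    Measure.addHaar_smul_of_nonneg μ (by linarith) S
  have hsmul_real : μ.real ((1 - r / 2) • S) = (1 - r / 2) ^ finrank ℝ E * μ.real S := by
    rw [measureReal_def, hsmul, ENNReal.toReal_mul,
      ENNReal.toReal_ofReal (pow_nonneg (by linarith) _), measureReal_def]
  have hcover : μ.real S ≤ μ.real (Ioo (1 - r) 1 • s) + (1 - r / 2) ^ finrank ℝ E * μ.real S :=
    calc μ.real S ≤ μ.real (Ioo (1 - r) 1 • s ∪ (1 - r / 2) • S) :=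
          measureReal_mono (Ioo_zero_one_smul_subset s hr₀) (measure_union_ne_top hshell
            (by rw [hsmul]; exact ENNReal.mul_ne_top ENNReal.ofReal_ne_top hs))
      _ ≤ _ := hsmul_real ▸ measureReal_union_le _ _
  have hpow : (1 - r / 2) ^ finrank ℝ E ≤ 1 - r / 2 :=
    pow_le_of_le_one (by linarith) (by linarith) finrank_pos.ne'
  nlinarith [mul_le_mul_of_nonneg_right hpow (measureReal_nonneg (μ := μ) (s := S))]

lemma toSphere_real_preimage_closedBall_le (q : E) {r : ℝ} (hr₀ : 0 < r) (hr₁ : r ≤ 1) :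
    μ.toSphere.real ((↑) ⁻¹' closedBall q r) ≤
      2 * finrank ℝ E * 2 ^ finrank ℝ E * r ^ (finrank ℝ E - 1) * μ.real (ball 0 1) := by
  rcases subsingleton_or_nontrivial E with hE | hE
  · rw [(μ.toSphere_eq_zero_iff).2 hE, measureReal_zero_apply]
    positivity
  set d := finrank ℝ E
  set A := sphere (0 : E) 1 ∩ closedBall q r
  have hσ : μ.toSphere.real ((↑) ⁻¹' closedBall q r) = d * μ.real (Ioo (0 : ℝ) 1 • A) := by
    rw [measureReal_def, μ.toSphere_apply' (measurableSet_closedBall.preimage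
      continuous_subtype_val.measurable), Subtype.image_preimage_coe, ENNReal.toReal_mul,
      ENNReal.toReal_natCast, measureReal_def]
  have hA : μ (Ioo (0 : ℝ) 1 • A) ≠ ∞ := by
    refine measure_ne_top_of_subset ?_ (measure_ball_lt_top (x := 0) (r := 1)).ne
    rintro _ ⟨t, ht, a, ⟨ha, -⟩, rfl⟩
    rw [mem_sphere_zero_iff_norm] at ha
    simpa [norm_smul, ha, abs_of_pos ht.1] using ht.2
  have hball : μ.real (ball q (2 * r)) = 2 ^ d * r ^ (d - 1) * μ.real (ball 0 1) * r := by
    have hr : r ^ finrank ℝ E = r ^ (d - 1) * r := by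
      rw [← pow_succ, Nat.sub_add_cancel finrank_pos]
    rw [measureReal_def, Measure.addHaar_ball μ q (by linarith), ENNReal.toReal_mul,
      ENNReal.toReal_ofReal (by positivity), measureReal_def, mul_pow, hr]
    ring
  have hcone : r / 2 * μ.real (Ioo (0 : ℝ) 1 • A) ≤ 2 ^ d * r ^ (d - 1) * μ.real (ball 0 1) * r :=
    hball ▸ (mul_measureReal_Ioo_zero_one_smul_le μ A hA hr₀ hr₁).trans
      (measureReal_mono (Ioo_smul_sphere_inter_closedBall_subset_ball q r))
  have hcone' : μ.real (Ioo (0 : ℝ) 1 • A) ≤ 2 * (2 ^ d * r ^ (d - 1) * μ.real (ball 0 1)) := by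
    nlinarith
  rw [hσ]
  linarith [mul_le_mul_of_nonneg_left hcone' (Nat.cast_nonneg d : (0 : ℝ) ≤ d)]

lemma lintegral_toSphere_inv_norm_sub_pow_le {α : ℕ} (hα : α + 2 ≤ finrank ℝ E) (w : E) :
    ∫⁻ θ, ENNReal.ofReal ((‖(θ : E) - w‖ ^ α)⁻¹) ∂μ.toSphere ≤
      μ.toSphere univ +
        ENNReal.ofReal (4 * finrank ℝ E * 4 ^ finrank ℝ E * μ.real (ball 0 1)) := by
  set d := finrank ℝ E
  set b := μ.real (ball (0 : E) 1)
  set cap : ℕ → Set (sphere (0 : E) 1) := fun k => (↑) ⁻¹' closedBall w (2⁻¹ ^ k)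
  have hcap : ∀ k, MeasurableSet (cap k) := fun k =>
    measurableSet_closedBall.preimage continuous_subtype_val.measurable
  have hpt : ∀ θ : sphere (0 : E) 1, ENNReal.ofReal ((‖(θ : E) - w‖ ^ α)⁻¹) ≤
      1 + ∑' k, (cap k).indicator (fun _ => ENNReal.ofReal (2 ^ ((k + 1) * α))) θ := by
    intro θ
    rcases inv_pow_le_one_or_exists_le_inv_two_pow (norm_nonneg ((θ : E) - w)) α with
      h | ⟨k, hk, h⟩
    · exact (ENNReal.ofReal_le_one.2 h).trans le_self_add
    · refine (ENNReal.ofReal_le_ofReal h).trans (le_add_left (le_trans ?_ (ENNReal.le_tsum k)))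
      rw [indicator_of_mem (by simpa [cap, dist_eq_norm] using hk)]
  have hterm : ∀ k, ENNReal.ofReal (2 ^ ((k + 1) * α)) * μ.toSphere (cap k) ≤
      ENNReal.ofReal (2 * d * 4 ^ d * b * 2⁻¹ ^ k) := by
    intro k
    rw [← ofReal_measureReal, ← ENNReal.ofReal_mul (by positivity)]
    refine ENNReal.ofReal_le_ofReal ?_
    calc 2 ^ ((k + 1) * α) * μ.toSphere.real (cap k)
        ≤ 2 ^ ((k + 1) * α) * (2 * d * 2 ^ d * (2⁻¹ ^ k) ^ (d - 1) * b) := by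
          gcongr
          exact toSphere_real_preimage_closedBall_le μ w (by positivity)
            (pow_le_one₀ (by norm_num) (by norm_num))
      _ = 2 * d * 2 ^ d * b * (2 ^ ((k + 1) * α) * (2⁻¹ ^ k) ^ (d - 1)) := by ring
      _ ≤ 2 * d * 2 ^ d * b * (2 ^ d * 2⁻¹ ^ k) :=
          mul_le_mul_of_nonneg_left (two_pow_mul_inv_two_pow_le hα k) (by positivity)
      _ = 2 * d * 4 ^ d * b * 2⁻¹ ^ k := by
          rw [show (4 : ℝ) = 2 * 2 by norm_num, mul_pow]; ring
  calc ∫⁻ θ, ENNReal.ofReal ((‖(θ : E) - w‖ ^ α)⁻¹) ∂μ.toSphere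
      ≤ ∫⁻ θ, 1 + ∑' k, (cap k).indicator (fun _ => ENNReal.ofReal (2 ^ ((k + 1) * α))) θ
          ∂μ.toSphere := lintegral_mono hpt
    _ = μ.toSphere univ + ∑' k, ENNReal.ofReal (2 ^ ((k + 1) * α)) * μ.toSphere (cap k) := by
        rw [lintegral_add_left measurable_const, lintegral_one,
          lintegral_tsum fun k => (measurable_const.indicator (hcap k)).aemeasurable]
        simp only [lintegral_indicator_const (hcap _)]
    _ ≤ μ.toSphere univ + ∑' k : ℕ, ENNReal.ofReal (2 * d * 4 ^ d * b * 2⁻¹ ^ k) := by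
        gcongr with k
        exact hterm k
    _ = _ := by
        rw [← ENNReal.ofReal_tsum_of_nonneg (fun k => by positivity)
          ((summable_geometric_of_lt_one (by norm_num) (by norm_num)).mul_left _),
          tsum_mul_left, tsum_geometric_inv_two]
        ring_nf

lemma exists_lintegral_toSphere_inv_norm_add_smul_sub_pow_le :
    ∃ K : ℝ≥0∞, K ≠ ∞ ∧ ∀ α : ℕ, α + 2 ≤ finrank ℝ E → ∀ R : ℝ, 1 ≤ R → ∀ x z : E,
      ∫⁻ θ, ENNReal.ofReal ((‖x + R • (θ : E) - z‖ ^ α)⁻¹) ∂μ.toSphere ≤ K :=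
  ⟨_, ENNReal.add_ne_top.2 ⟨measure_ne_top _ _, ENNReal.ofReal_ne_top⟩, fun α hα _ hR x z =>
    (lintegral_mono fun θ : sphere (0 : E) 1 => ENNReal.ofReal_le_ofReal
      (inv_norm_add_smul_sub_pow_le hR x (θ : E) z α)).trans
      (lintegral_toSphere_inv_norm_sub_pow_le μ hα _)⟩

lemma exists_integral_toSphere_integral_div_norm_pow_le :
    ∃ C : ℝ, 0 ≤ C ∧ ∀ f : E → ℝ, Integrable f μ → ∀ α : ℕ, α + 2 ≤ finrank ℝ E → ∀ R : ℝ, 1 ≤ R →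
      ∀ x : E,
        Integrable (fun θ : sphere (0 : E) 1 => ∫ z, f z / ‖x + R • (θ : E) - z‖ ^ α ∂μ)
          μ.toSphere ∧
        ∫ θ, ∫ z, f z / ‖x + R • (θ : E) - z‖ ^ α ∂μ ∂μ.toSphere ≤ C * ∫ z, ‖f z‖ ∂μ := by
  obtain ⟨K, hK_top, hK⟩ := exists_lintegral_toSphere_inv_norm_add_smul_sub_pow_le μ
  refine ⟨K.toReal, ENNReal.toReal_nonneg, fun f hf α hα R hR x => ?_⟩
  have hk₀ : ∀ (θ : sphere (0 : E) 1) z, 0 ≤ (‖x + R • (θ : E) - z‖ ^ α)⁻¹ :=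
    fun _ _ => by positivity
  have hk : Measurable (Function.uncurry fun (θ : sphere (0 : E) 1) z =>
      (‖x + R • (θ : E) - z‖ ^ α)⁻¹) := by
    fun_prop
  simp only [div_eq_mul_inv]
  exact ⟨integrable_integral_mul hf hk₀ hk (hK α hα R hR x) hK_top,
    integral_integral_mul_le hf hk₀ hk (hK α hα R hR x) hK_top⟩

end SphereKernel


lemma integral_pos_of_forall_pos {α : Type*} [MeasurableSpace α] {μ : Measure α} {g : α → ℝ}
    (hg : Integrable g μ) (hpos : ∀ a, 0 < g a) (hμ : μ ≠ 0) : 0 < ∫ a, g a ∂μ := by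
  rw [integral_pos_iff_support_of_nonneg (fun a => (hpos a).le) hg,
    Function.support_eq_univ fun a => (hpos a).ne']
  exact Measure.measure_univ_pos.2 hμ

lemma toSphere_volume_ne_zero {n : ℕ} (hn : n ≠ 0) :
    (volume : Measure (EuclideanSpace ℝ (Fin n))).toSphere ≠ 0 :=
  have : Nontrivial (EuclideanSpace ℝ (Fin n)) :=
    Module.nontrivial_of_finrank_pos (R := ℝ) (by rw [finrank_euclideanSpace_fin]; omega)
  Measure.toSphere_ne_zero _

lemma omegaN_pos {n : ℕ} (hn : n ≠ 0) : 0 < omegaN n :=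
  ENNReal.toReal_pos (Measure.measure_univ_ne_zero.2 (toSphere_volume_ne_zero hn))
    (measure_ne_top (volume : Measure (EuclideanSpace ℝ (Fin n))).toSphere univ)

lemma cconst_pos (n : ℕ) : 0 < cconst n := by
  unfold cconst
  positivity

theorem stmt17_general (m n : ℕ) (hn : n = 2 * m)
    (f : EuclideanSpace ℝ (Fin n) → ℝ) (hf : MeasureTheory.Integrable f)
    (hformula : ∀ i : ℕ, 1 ≤ i → i ≤ m - 1 → ∀ y : EuclideanSpace ℝ (Fin n),
      -(negLapIter i (logPot n f) y)
          = (|dCoeff n i| / cconst n) * ∫ z, f z / ‖y - z‖ ^ (2 * i) ∧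
        0 < -(negLapIter i (logPot n f) y)) :
    ∃ C : ℝ, ∀ x : EuclideanSpace ℝ (Fin n), ∀ i : ℕ, 1 ≤ i → i ≤ m - 1 →
      0 < sphereAvg n (fun y => -(negLapIter i (logPot n f) (x + y))) 4 ∧
      sphereAvg n (fun y => -(negLapIter i (logPot n f) (x + y))) 4 ≤ C := by
  set σ := (volume : Measure (EuclideanSpace ℝ (Fin n))).toSphere
  obtain ⟨C, hC₀, hC⟩ := exists_integral_toSphere_integral_div_norm_pow_le
    (volume : Measure (EuclideanSpace ℝ (Fin n)))
  refine ⟨(∑ j ∈ Finset.Icc 1 (m - 1), |dCoeff n j|) / cconst n * (C * ∫ z, ‖f z‖) / omegaN n,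
    fun x i hi₁ hi₂ => ?_⟩
  obtain ⟨hint, hle⟩ := hC f hf (2 * i) (by rw [finrank_euclideanSpace_fin]; omega) 4 (by norm_num) x
  set c := |dCoeff n i| / cconst n
  have hc₀ : 0 ≤ c := div_nonneg (abs_nonneg _) (cconst_pos n).le
  have hval : sphereAvg n (fun y => -(negLapIter i (logPot n f) (x + y))) 4 =
      (∫ θ, (c * ∫ z, f z / ‖x + (4 : ℝ) • (θ : EuclideanSpace ℝ (Fin n)) - z‖ ^ (2 * i)) ∂σ) /
        omegaN n := by
    simp only [sphereAvg, sphereMeasure, (hformula i hi₁ hi₂ _).1, c, σ]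
  have hpos : ∀ θ : sphere (0 : EuclideanSpace ℝ (Fin n)) 1,
      0 < c * ∫ z, f z / ‖x + (4 : ℝ) • (θ : EuclideanSpace ℝ (Fin n)) - z‖ ^ (2 * i) :=
    fun θ => (hformula i hi₁ hi₂ _).1 ▸ (hformula i hi₁ hi₂ _).2
  have hc : c ≤ (∑ j ∈ Finset.Icc 1 (m - 1), |dCoeff n j|) / cconst n :=
    div_le_div_of_nonneg_right (Finset.single_le_sum (f := fun j => |dCoeff n j|)
      (fun _ _ => abs_nonneg _) (Finset.mem_Icc.2 ⟨hi₁, hi₂⟩)) (cconst_pos n).le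
  rw [hval]
  refine ⟨div_pos (integral_pos_of_forall_pos (hint.const_mul c) hpos
    (toSphere_volume_ne_zero (by omega))) (omegaN_pos (by omega)), ?_⟩
  rw [integral_const_mul]
  refine div_le_div_of_nonneg_right ?_ (omegaN_pos (by omega)).le
  calc c * _ ≤ c * (C * ∫ z, ‖f z‖) := by gcongr
    _ ≤ _ := by gcongr

/-- Uniform two-sided bound on the spherical averages `⨍_{∂B₄(x)} (-(-Δ)^i v) dσ`,
`i = 1, …, m-1`, for the logarithmic potential `v` of a nonnegative `L¹` function `f`. -/
theorem stmt17 (m n : ℕ) (hm : 2 ≤ m) (hn : n = 2 * m)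
    (f : EuclideanSpace ℝ (Fin n) → ℝ) (hf : MeasureTheory.Integrable f)
    (hpos : ∀ y, 0 ≤ f y)
    (hformula : ∀ i : ℕ, 1 ≤ i → i ≤ m - 1 → ∀ y : EuclideanSpace ℝ (Fin n),
      -(negLapIter i (logPot n f) y)
          = (|dCoeff n i| / cconst n) * ∫ z, f z / ‖y - z‖ ^ (2 * i) ∧
        0 < -(negLapIter i (logPot n f) y)) :
    ∃ C : ℝ, ∀ x : EuclideanSpace ℝ (Fin n), ∀ i : ℕ, 1 ≤ i → i ≤ m - 1 →
      0 < sphereAvg n (fun y => -(negLapIter i (logPot n f) (x + y))) 4 ∧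
      sphereAvg n (fun y => -(negLapIter i (logPot n f) (x + y))) 4 ≤ C :=
  stmt17_general m n hn f hf hformula
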